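/- For every prime power q > 3, the girth of Λ_{5,q} is exactly 10. -/

import Mathlib

/-- Vertices of one side of the graph `Λ(k,q)`: tuples of `k+1` elements of `F`,
modelled as functions `ℕ → F` vanishing above index `k`. -/
abbrev PVec (F : Type*) [Zero F] (k : ℕ) : Type _ := {f : ℕ → F // ∀ i, k < i → f i = 0}

/-- Adjacency condition between a left vertex `[l]` (with `l 1 = l 2`) and a right
vertex `⟨r⟩` (with `r 1 = 0`) in `Λ(k,q)`: for `2 ≤ i ≤ k`,
`l i + r i = r 0 * l (i-2)` if `i ≡ 2, 3 (mod 4)` and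
`l i + r i = l 0 * r (i-2)` if `i ≡ 0, 1 (mod 4)`. -/
def lamAdjLR {F : Type*} [Field F] (k : ℕ) (l r : ℕ → F) : Prop :=
  l 1 = l 2 ∧ r 1 = 0 ∧ ∀ i, 2 ≤ i → i ≤ k →
    ((i % 4 = 2 ∨ i % 4 = 3) → l i + r i = r 0 * l (i - 2)) ∧
    ((i % 4 = 0 ∨ i % 4 = 1) → l i + r i = l 0 * r (i - 2))

/-- The bipartite graph `Λ(k,q)` (the graph `Λ_{k,q}` of the paper, isomorphic to `D(k,q)`). -/
def LambdaGraph (F : Type*) [Field F] (k : ℕ) : SimpleGraph (PVec F k ⊕ PVec F k) where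
  Adj x y := match x, y with
    | Sum.inl l, Sum.inr r => lamAdjLR k l.1 r.1
    | Sum.inr r, Sum.inl l => lamAdjLR k l.1 r.1
    | _, _ => False
  symm := ⟨by rintro (l | r) (l' | r') h <;> exact h⟩
  loopless := ⟨by rintro (l | r) h <;> exact h⟩

/-! A left vertex of `Λ(k,q)` is determined by any one of its neighbours together with its first
coordinate, and dually. Hence along a cycle `l₀ r₀ l₁ r₁ …` consecutive left vertices have distinct
first coordinates `aⱼ = lⱼ(0)`, and so do consecutive right vertices (`bⱼ = rⱼ(0)`). For `k = 5`,
passing from `lⱼ` to `lⱼ₊₁` through `rⱼ` changes the coordinates of `lⱼ` by increments that depend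
only on `lⱼ`, `aⱼ₊₁ - aⱼ` and `bⱼ`. Around a cycle of length `2m` each coordinate returns to its
starting value, so the increments sum to zero; for `m = 2, 3, 4` these polynomial identities force
a product of differences `aⱼ₊₁ - aⱼ`, `bⱼ₊₁ - bⱼ` to vanish. An explicit `10`-cycle, built from an
element `y ∉ {0, 1, 1/2}` of `F` (which needs `q ≥ 4`), shows that the girth is not larger. -/

open SimpleGraph

lemma SimpleGraph.Walk.adj_getVert_mod {V : Type*} {G : SimpleGraph V} {u : V} (c : G.Walk u u)
    (hc : 0 < c.length) (i : ℕ) :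
    G.Adj (c.getVert (i % c.length)) (c.getVert ((i + 1) % c.length)) := by
  have hlt := Nat.mod_lt i hc
  obtain h | h : i % c.length + 1 < c.length ∨ i % c.length + 1 = c.length := by omega
  · rw [← Nat.mod_add_mod, Nat.mod_eq_of_lt h]
    exact c.adj_getVert_succ hlt
  · have h0 : (i + 1) % c.length = 0 := by rw [← Nat.mod_add_mod, h, Nat.mod_self]
    rw [h0, c.getVert_zero]
    convert c.adj_getVert_succ hlt
    rw [h, c.getVert_length]

lemma PVec.ext_of_le {F : Type*} [Zero F] {k : ℕ} {l l' : PVec F k}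
    (h : ∀ i ≤ k, l.1 i = l'.1 i) : l = l' :=
  Subtype.ext <| funext fun i =>
    if hi : i ≤ k then h i hi else by rw [l.2 i (by omega), l'.2 i (by omega)]

namespace LambdaGraph

variable {F : Type*} [Field F] {k : ℕ}

def coords : PVec F k ⊕ PVec F k → ℕ → F := Sum.elim Subtype.val Subtype.val

lemma eq_of_lamAdjLR_left {l l' r : PVec F k} (h : lamAdjLR k l.1 r.1)
    (h' : lamAdjLR k l'.1 r.1) (h0 : l.1 0 = l'.1 0) : l = l' := by
  obtain ⟨h1, -, hi⟩ := h
  obtain ⟨h1', -, hi'⟩ := h'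
  have step : ∀ i, 2 ≤ i → i ≤ k → l.1 (i - 2) = l'.1 (i - 2) → l.1 i = l'.1 i := by
    intro i h2 hk hprev
    obtain ⟨e23, e01⟩ := hi i h2 hk
    obtain ⟨e23', e01'⟩ := hi' i h2 hk
    rcases (by omega : (i % 4 = 2 ∨ i % 4 = 3) ∨ (i % 4 = 0 ∨ i % 4 = 1)) with hm | hm
    · linear_combination e23 hm - e23' hm + r.1 0 * hprev
    · linear_combination e01 hm - e01' hm + r.1 (i - 2) * h0
  have h2 : l.1 2 = l'.1 2 := by
    by_cases hk : 2 ≤ k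
    · exact step 2 le_rfl hk h0
    · rw [l.2 2 (by omega), l'.2 2 (by omega)]
  refine PVec.ext_of_le fun i hik => ?_
  induction i using Nat.strong_induction_on with
  | _ i ih =>
    match i with
    | 0 => exact h0
    | 1 => rw [h1, h1', h2]
    | j + 2 => exact step (j + 2) (by omega) hik (ih j (by omega) (by omega))

lemma eq_of_lamAdjLR_right {l r r' : PVec F k} (h : lamAdjLR k l.1 r.1)
    (h' : lamAdjLR k l.1 r'.1) (h0 : r.1 0 = r'.1 0) : r = r' := by
  obtain ⟨-, h1, hi⟩ := h
  obtain ⟨-, h1', hi'⟩ := h'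
  refine PVec.ext_of_le fun i hik => ?_
  induction i using Nat.strong_induction_on with
  | _ i ih =>
    match i with
    | 0 => exact h0
    | 1 => rw [h1, h1']
    | j + 2 =>
      obtain ⟨e23, e01⟩ := hi (j + 2) (by omega) hik
      obtain ⟨e23', e01'⟩ := hi' (j + 2) (by omega) hik
      rw [Nat.add_sub_cancel] at e23 e01 e23' e01'
      rcases (by omega : ((j + 2) % 4 = 2 ∨ (j + 2) % 4 = 3) ∨ ((j + 2) % 4 = 0 ∨ (j + 2) % 4 = 1))
        with hm | hm
      · linear_combination e23 hm - e23' hm + l.1 j * h0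
      · linear_combination e01 hm - e01' hm + l.1 0 * ih j (by omega) (by omega)

lemma eq_of_adj_of_adj {z z' w : PVec F k ⊕ PVec F k} (h : (LambdaGraph F k).Adj z w)
    (h' : (LambdaGraph F k).Adj z' w) (h0 : coords z 0 = coords z' 0) : z = z' := by
  rcases z with l | r <;> rcases z' with l' | r' <;> rcases w with l'' | r'' <;>
    first | exact h.elim | exact h'.elim | skip
  · exact congrArg Sum.inl (eq_of_lamAdjLR_left h h' h0)
  · exact congrArg Sum.inr (eq_of_lamAdjLR_right h h' h0)

lemma lamAdjLR_coords_of_adj {z w : PVec F k ⊕ PVec F k} (h : (LambdaGraph F k).Adj z w)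
    (hz : z.isLeft) : lamAdjLR k (coords z) (coords w) := by
  rcases z with l | r <;> rcases w with l' | r'
  exacts [h.elim, h, by simp at hz, h.elim]

def sideColoring : (LambdaGraph F k).Coloring Bool :=
  Coloring.mk Sum.isLeft <| by rintro (l | r) (l' | r') h <;> first | exact h.elim | simp

lemma even_iff_isLeft_getVert {u v : PVec F k ⊕ PVec F k} (c : (LambdaGraph F k).Walk u v)
    {i : ℕ} (hi : i ≤ c.length) : Even i ↔ (u.isLeft ↔ (c.getVert i).isLeft) := by
  have := sideColoring.even_length_iff_congr (c.take i)
  rwa [Walk.take_length, min_eq_left hi] at this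

lemma lamAdjLR_five_iff {l r : ℕ → F} : lamAdjLR 5 l r ↔ l 1 = l 2 ∧ r 1 = 0 ∧
    l 2 + r 2 = r 0 * l 0 ∧ l 3 + r 3 = r 0 * l 1 ∧ l 4 + r 4 = l 0 * r 2 ∧
      l 5 + r 5 = l 0 * r 3 := by
  refine and_congr_right fun _ => and_congr_right fun _ => ⟨fun h => ?_, fun h i hi2 hi5 => ?_⟩
  · exact ⟨(h 2 le_rfl (by norm_num)).1 (by norm_num),
      (h 3 (by norm_num) (by norm_num)).1 (by norm_num),
      (h 4 (by norm_num) (by norm_num)).2 (by norm_num), (h 5 (by norm_num) le_rfl).2 (by norm_num)⟩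
  · interval_cases i <;> simp [h]

/- For a common right neighbour `r` of `l` and `l'` with `r 0 = b`, the last two increments
are `r 2 * (l' 0 - l 0)` and `r 3 * (l' 0 - l 0)`, with `r 2 = b * l 0 - l 2` and
`r 3 = b * l 2 - l 3`. -/
def IsStepVia (b : F) (l l' : ℕ → F) : Prop :=
  l' 2 - l 2 = b * (l' 0 - l 0) ∧ l' 3 - l 3 = b * (l' 2 - l 2) ∧
    l' 4 - l 4 = (b * l 0 - l 2) * (l' 0 - l 0) ∧ l' 5 - l 5 = (b * l 2 - l 3) * (l' 0 - l 0)

lemma isStepVia_of_lamAdjLR {l l' r : ℕ → F} (h : lamAdjLR 5 l r) (h' : lamAdjLR 5 l' r) :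
    IsStepVia (r 0) l l' := by
  obtain ⟨h12, -, e2, e3, e4, e5⟩ := lamAdjLR_five_iff.1 h
  obtain ⟨h12', -, e2', e3', e4', e5'⟩ := lamAdjLR_five_iff.1 h'
  rw [h12] at e3
  rw [h12'] at e3'
  exact ⟨by linear_combination e2' - e2, by linear_combination e3' - e3,
    by linear_combination e4' - e4 + (l' 0 - l 0) * e2,
    by linear_combination e5' - e5 + (l' 0 - l 0) * e3⟩

def IsClosedChain (m : ℕ) (L : ℕ → ℕ → F) (b : ℕ → F) : Prop :=
  L m = L 0 ∧ ∀ j < m, IsStepVia (b j) (L j) (L (j + 1))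

lemma not_isClosedChain {m : ℕ} {L : ℕ → ℕ → F} {b : ℕ → F} (hm : 2 ≤ m) (hm4 : m ≤ 4)
    (hL : ∀ j, L j 0 ≠ L (j + 1) 0) (hb : ∀ j, b j ≠ b (j + 1)) : ¬IsClosedChain m L b := by
  rintro ⟨hper, hstep⟩
  have ha : ∀ j, L (j + 1) 0 - L j 0 ≠ 0 := fun j => sub_ne_zero.2 (hL j).symm
  have hb' : ∀ j, b (j + 1) - b j ≠ 0 := fun j => sub_ne_zero.2 (hb j).symm
  interval_cases m
  · obtain ⟨hp0, -⟩ : IsStepVia (b 0) (L 0) (L 1) := hstep 0 (by norm_num)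
    obtain ⟨hp1, -⟩ : IsStepVia (b 1) (L 1) (L 0) := hper ▸ hstep 1 (by norm_num)
    refine mul_ne_zero (ha 0) (hb' 0) ?_
    linear_combination hp0 + hp1
  · obtain ⟨hp0, hu0, -⟩ : IsStepVia (b 0) (L 0) (L 1) := hstep 0 (by norm_num)
    obtain ⟨hp1, hu1, -⟩ : IsStepVia (b 1) (L 1) (L 2) := hstep 1 (by norm_num)
    obtain ⟨hp2, hu2, -⟩ : IsStepVia (b 2) (L 2) (L 0) := hper ▸ hstep 2 (by norm_num)
    refine mul_ne_zero (mul_ne_zero (hb' 0) (hb' 1)) (ha 1) ?_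
    linear_combination hu0 + hu1 + hu2 + b 0 * hp0 + b 1 * hp1 + b 2 * hp2
      - (b 0 + b 2) * (hp0 + hp1 + hp2)
  · obtain ⟨hp0, hu0, hv0, hw0⟩ : IsStepVia (b 0) (L 0) (L 1) := hstep 0 (by norm_num)
    obtain ⟨hp1, hu1, hv1, hw1⟩ : IsStepVia (b 1) (L 1) (L 2) := hstep 1 (by norm_num)
    obtain ⟨hp2, hu2, hv2, hw2⟩ : IsStepVia (b 2) (L 2) (L 3) := hstep 2 (by norm_num)
    obtain ⟨hp3, hu3, hv3, hw3⟩ : IsStepVia (b 3) (L 3) (L 0) := hper ▸ hstep 3 (by norm_num)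
    refine mul_ne_zero (mul_ne_zero (mul_ne_zero (ha 0) (ha 1)) (hb' 0)) (hb' 1) ?_
    -- The increments of coordinates `5` and `4` telescope; the rest of this certificate
    -- (found by linear algebra) rewrites their sum in terms of the first coordinates.
    linear_combination (hw0 + hw1 + hw2 + hw3) - b 2 * (hv0 + hv1 + hv2 + hv3)
      + (L 1 0 - L 0 0) * hu0 + (L 2 0 - L 0 0) * hu1 + (L 3 0 - L 0 0) * hu2
      + (b 2 * L 2 0 - L 2 2) * (hp0 + hp1 + hp2 + hp3)
      + b 2 * (L 0 0 - L 1 0) * hp0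
      + (b 2 * (L 0 0 - L 2 0) + (L 0 0 - L 1 0) * (b 0 - b 1)) * hp1
      + b 3 * (L 0 0 - L 3 0) * hp2

lemma exists_isClosedChain_of_isCycle {u : PVec F 5 ⊕ PVec F 5} (hu : u.isLeft)
    {c : (LambdaGraph F 5).Walk u u} (hc : c.IsCycle) :
    ∃ (m : ℕ) (L : ℕ → ℕ → F) (b : ℕ → F), c.length = 2 * m ∧ IsClosedChain m L b ∧
      (∀ j, L j 0 ≠ L (j + 1) 0) ∧ ∀ j, b j ≠ b (j + 1) := by
  have hc3 := hc.three_le_length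
  have hpos : 0 < c.length := by omega
  obtain ⟨m, hm⟩ : Even c.length :=
    (even_iff_isLeft_getVert c le_rfl).2 (by simp [c.getVert_length])
  have hadj := c.adj_getVert_mod hpos
  have hleft : ∀ j, (c.getVert (2 * j % c.length)).isLeft := fun j => by
    have heven : Even (2 * j % c.length) := by
      rw [Nat.even_iff, hm, ← two_mul, Nat.mul_mod_mul_left, Nat.mul_mod_right]
    simpa [hu] using (even_iff_isLeft_getVert c (Nat.mod_lt _ hpos).le).1 heven
  -- Reading the cycle modulo its length makes the vertex sequence periodic.
  let x : ℕ → ℕ → F := fun i => coords (c.getVert (i % c.length))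
  have hne : ∀ i, x i 0 ≠ x (i + 2) 0 := by
    intro i h
    have hi := hc.getVert_injOn' (Nat.le_sub_one_of_lt (Nat.mod_lt i hpos))
      (Nat.le_sub_one_of_lt (Nat.mod_lt (i + 2) hpos))
      (eq_of_adj_of_adj (hadj i) (hadj (i + 1)).symm h)
    have := Nat.le_of_dvd two_pos (by simpa using (Nat.modEq_iff_dvd' (by omega)).1 hi)
    omega
  refine ⟨m, fun j => x (2 * j), fun j => x (2 * j + 1) 0, by omega, ⟨?_, fun j _ => ?_⟩,
    fun j => hne (2 * j), fun j => hne (2 * j + 1)⟩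
  · simp [x, hm, ← two_mul]
  · have h1 := lamAdjLR_coords_of_adj (hadj (2 * j)) (hleft j)
    have h2 := lamAdjLR_coords_of_adj (hadj (2 * j + 1)).symm (hleft (j + 1))
    exact isStepVia_of_lamAdjLR h1 h2

lemma ten_le_egirth : 10 ≤ (LambdaGraph F 5).egirth := by
  rw [le_egirth]
  intro u c hc
  wlog hu : u.isLeft generalizing u c with H
  · classical
    have h1 : (c.getVert 1).isLeft := by
      simpa [hu] using (even_iff_isLeft_getVert c (i := 1) (by have := hc.three_le_length; omega))
    simpa using H _ (c.rotate _ (c.getVert_mem_support 1)) (hc.rotate _) h1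
  obtain ⟨m, L, b, hlen, hchain, hL, hb⟩ := exists_isClosedChain_of_isCycle hu hc
  have := hc.three_le_length
  by_contra hlt
  have : c.length < 10 := by exact_mod_cast not_le.mp hlt
  exact not_isClosedChain (by omega) (by omega) hL hb hchain

def leftVertex (a p u v w : F) : PVec F 5 :=
  ⟨fun | 0 => a | 1 => p | 2 => p | 3 => u | 4 => v | 5 => w | _ + 6 => 0,
    fun i _ => by match i with | _ + 6 => rfl⟩

def rightVertex (b s t x y : F) : PVec F 5 :=
  ⟨fun | 0 => b | 1 => 0 | 2 => s | 3 => t | 4 => x | 5 => y | _ + 6 => 0,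
    fun i _ => by match i with | _ + 6 => rfl⟩

lemma leftVertex_inj {a p u v w a' p' u' v' w' : F} :
    leftVertex a p u v w = leftVertex a' p' u' v' w' ↔
      a = a' ∧ p = p' ∧ u = u' ∧ v = v' ∧ w = w' := by
  refine ⟨fun h => ?_, by rintro ⟨rfl, rfl, rfl, rfl, rfl⟩; rfl⟩
  have := congrArg Subtype.val h
  exact ⟨congrFun this 0, congrFun this 1, congrFun this 3, congrFun this 4, congrFun this 5⟩

lemma rightVertex_inj {b s t x y b' s' t' x' y' : F} :
    rightVertex b s t x y = rightVertex b' s' t' x' y' ↔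
      b = b' ∧ s = s' ∧ t = t' ∧ x = x' ∧ y = y' := by
  refine ⟨fun h => ?_, by rintro ⟨rfl, rfl, rfl, rfl, rfl⟩; rfl⟩
  have := congrArg Subtype.val h
  exact ⟨congrFun this 0, congrFun this 2, congrFun this 3, congrFun this 4, congrFun this 5⟩

lemma leftVertex_adj_rightVertex {a p u v w b s t x y : F} (h2 : p + s = b * a)
    (h3 : u + t = b * p) (h4 : v + x = a * s) (h5 : w + y = a * t) :
    (LambdaGraph F 5).Adj (.inl (leftVertex a p u v w)) (.inr (rightVertex b s t x y)) :=
  lamAdjLR_five_iff.2 ⟨rfl, rfl, h2, h3, h4, h5⟩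

lemma egirth_le_ten {y : F} (hy0 : y ≠ 0) (hy1 : y ≠ 1) (hy2 : 2 * y ≠ 1) :
    (LambdaGraph F 5).egirth ≤ 10 := by
  let L₁ := leftVertex (0 : F) 0 0 0 0
  let L₂ := leftVertex (1 : F) 0 0 0 0
  let L₃ := leftVertex 0 (1 - 2 * y) (-4 * y ^ 2 + 4 * y - 1) (1 - 2 * y) 0
  let L₄ := leftVertex y (y ^ 2 - 2 * y + 1) (y ^ 3 - 4 * y ^ 2 + 4 * y - 1)
    (2 * y ^ 2 - 3 * y + 1) (2 * y ^ 3 - 3 * y ^ 2 + y)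
  let L₅ := leftVertex (1 - y) (y - y ^ 2) (y ^ 2 - y ^ 3) 0 0
  let R₁ := rightVertex (0 : F) 0 0 0 0
  let R₂ := rightVertex (2 * y - 1) (2 * y - 1) 0 (2 * y - 1) 0
  let R₃ := rightVertex y (2 * y - 1) (2 * y ^ 2 - 3 * y + 1) (2 * y - 1) 0
  let R₄ := rightVertex (y - 1) (y - 1) (y ^ 2 - y) (-y ^ 2 + 2 * y - 1) (-y ^ 3 + 2 * y ^ 2 - y)
  let R₅ := rightVertex y 0 0 0 0
  have e₁ : (LambdaGraph F 5).Adj (.inl L₁) (.inr R₁) :=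
    leftVertex_adj_rightVertex (by ring) (by ring) (by ring) (by ring)
  have e₂ : (LambdaGraph F 5).Adj (.inl L₂) (.inr R₁) :=
    leftVertex_adj_rightVertex (by ring) (by ring) (by ring) (by ring)
  have e₃ : (LambdaGraph F 5).Adj (.inl L₂) (.inr R₂) :=
    leftVertex_adj_rightVertex (by ring) (by ring) (by ring) (by ring)
  have e₄ : (LambdaGraph F 5).Adj (.inl L₃) (.inr R₂) :=
    leftVertex_adj_rightVertex (by ring) (by ring) (by ring) (by ring)
  have e₅ : (LambdaGraph F 5).Adj (.inl L₃) (.inr R₃) :=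
    leftVertex_adj_rightVertex (by ring) (by ring) (by ring) (by ring)
  have e₆ : (LambdaGraph F 5).Adj (.inl L₄) (.inr R₃) :=
    leftVertex_adj_rightVertex (by ring) (by ring) (by ring) (by ring)
  have e₇ : (LambdaGraph F 5).Adj (.inl L₄) (.inr R₄) :=
    leftVertex_adj_rightVertex (by ring) (by ring) (by ring) (by ring)
  have e₈ : (LambdaGraph F 5).Adj (.inl L₅) (.inr R₄) :=
    leftVertex_adj_rightVertex (by ring) (by ring) (by ring) (by ring)
  have e₉ : (LambdaGraph F 5).Adj (.inl L₅) (.inr R₅) :=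
    leftVertex_adj_rightVertex (by ring) (by ring) (by ring) (by ring)
  have e₁₀ : (LambdaGraph F 5).Adj (.inl L₁) (.inr R₅) :=
    leftVertex_adj_rightVertex (by ring) (by ring) (by ring) (by ring)
  let c : (LambdaGraph F 5).Walk (.inl L₁) (.inl L₁) :=
    .cons e₁ <| .cons e₂.symm <| .cons e₃ <| .cons e₄.symm <| .cons e₅ <| .cons e₆.symm <|
      .cons e₇ <| .cons e₈.symm <| .cons e₉ <| .cons e₁₀.symm .nil
  have hc : c.IsCycle := by
    have h1 : (1 : F) - y ≠ 0 := sub_ne_zero.2 hy1.symm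
    have h2 : y - 1 ≠ 0 := sub_ne_zero.2 hy1
    have h3 : 2 * y - 1 ≠ 0 := sub_ne_zero.2 hy2
    have h4 : 1 - 2 * y ≠ 0 := sub_ne_zero.2 hy2.symm
    have h5 : y ≠ 1 - y := fun h => hy2 (by linear_combination h)
    have h6 : 2 * y - 1 ≠ y := fun h => hy1 (by linear_combination h)
    have h7 : 2 * y - 1 ≠ y - 1 := fun h => hy0 (by linear_combination h)
    have h8 : y ≠ y - 1 := fun h => one_ne_zero (by linear_combination h)
    have h9 : (1 : F) ≠ 1 - y := fun h => hy0 (by linear_combination h)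
    rw [Walk.isCycle_iff_isPath_tail_and_le_length, Walk.isPath_def]
    refine ⟨?_, by simp [c]⟩
    simp [c, L₁, L₂, L₃, L₄, L₅, R₁, R₂, R₃, R₄, R₅, leftVertex_inj, rightVertex_inj,
      hy0, h1, h2, h3, h4, h5, h6, h7, h8, h9, hy0.symm, hy1.symm, h1.symm, h2.symm, h3.symm,
      h4.symm, h8.symm]
  exact (egirth_le_length hc).trans (by rfl)

end LambdaGraph

lemma exists_ne_zero_ne_one_two_mul_ne_one {F : Type*} [Field F] [Fintype F]
    (h : 4 ≤ Fintype.card F) :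
    ∃ y : F, y ≠ 0 ∧ y ≠ 1 ∧ 2 * y ≠ 1 := by
  classical
  obtain ⟨y, -, hy⟩ := Finset.exists_mem_notMem_of_card_lt_card (s := {0, 1, (2 : F)⁻¹})
    (t := Finset.univ) (Finset.card_le_three.trans_lt (by rwa [Finset.card_univ]))
  simp only [Finset.mem_insert, Finset.mem_singleton, not_or] at hy
  exact ⟨y, hy.1, hy.2.1, fun h2 => hy.2.2 (eq_inv_of_mul_eq_one_right h2)⟩

theorem lambda5_girth_general (q : ℕ) (hq3 : 3 < q)
    (F : Type*) [Field F] [Fintype F] (hF : Fintype.card F = q) :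
    (LambdaGraph F 5).egirth = 10 := by
  obtain ⟨y, hy0, hy1, hy2⟩ :=
    exists_ne_zero_ne_one_two_mul_ne_one (F := F) (by omega)
  exact le_antisymm (LambdaGraph.egirth_le_ten hy0 hy1 hy2) LambdaGraph.ten_le_egirth

/-- For every prime power `q > 3`, the girth of `Λ(5,q)` is exactly 10. -/
theorem lambda5_girth (q : ℕ) (hq : IsPrimePow q) (hq3 : 3 < q)
    (F : Type*) [Field F] [Fintype F] (hF : Fintype.card F = q) :
    (LambdaGraph F 5).egirth = 10 :=
  lambda5_girth_general q hq3 F hF
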